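/- arXiv:2605.09814 — 4 statements merged into one kernel-verified Lean document; each statement's English description precedes it below -/
import Mathlib

section
/- If X and Y are independent real-valued random variables, each symmetric about 0 (i.e., -Y has the same distribution as Y, and similarly for X), then E[slack(X,Y)] = E[min(|X|,|Y|)], where slack(a,b) = |a| + |b| - |a+b|. -/
open MeasureTheory ProbabilityTheory

/-- slack(a,b) := |a| + |b| - |a+b|. -/
noncomputable def slack (a b : ℝ) : ℝ := |a| + |b| - |a + b|

/-!
Since `Y` is symmetric and independent of `X`, the pairs `(X, Y)` and `(X, -Y)` have the same
law, so `slack X Y` and `slack X (-Y)` have the same expectation. Pointwise,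
`slack a b + slack a (-b) = 2 min |a| |b|`, because `|a + b| + |a - b| = 2 max |a| |b|`.
-/

theorem abs_add_add_abs_sub_eq_two_mul_max {α : Type*} [CommRing α] [LinearOrder α]
    [IsStrictOrderedRing α] (a b : α) : |a + b| + |a - b| = 2 * max |a| |b| := by
  grind [abs_cases]

theorem slack_add_slack_neg (a b : ℝ) : slack a b + slack a (-b) = 2 * min |a| |b| := by
  rw [slack, slack, abs_neg, ← sub_eq_add_neg]
  linarith [abs_add_add_abs_sub_eq_two_mul_max a b, min_add_max |a| |b|]

theorem continuous_slack : Continuous (Function.uncurry slack) := by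
  unfold Function.uncurry slack
  fun_prop

theorem MeasureTheory.Integrable.slack {Ω : Type*} [MeasurableSpace Ω] {μ : Measure Ω}
    {X Y : Ω → ℝ} (hX : Integrable X μ) (hY : Integrable Y μ) :
    Integrable (fun ω => slack (X ω) (Y ω)) μ :=
  (hX.abs.add hY.abs).sub (hX.add hY).abs

theorem ProbabilityTheory.IndepFun.identDistrib_prodMk_neg {Ω α β : Type*} [MeasurableSpace Ω]
    [MeasurableSpace α] [MeasurableSpace β] [Neg β] [MeasurableNeg β] {μ : Measure Ω}
    [IsFiniteMeasure μ] {X : Ω → α} {Y : Ω → β} (hXY : IndepFun X Y μ) (hX : AEMeasurable X μ)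
    (hY : IdentDistrib Y (fun ω => -Y ω) μ μ) :
    IdentDistrib (fun ω => (X ω, Y ω)) (fun ω => (X ω, -Y ω)) μ μ :=
  (IdentDistrib.refl hX).prodMk hY hXY (hXY.comp measurable_id measurable_neg)

theorem expectation_slack_eq_expectation_min_general
    {Ω : Type*} [MeasurableSpace Ω] (μ : Measure Ω) [IsProbabilityMeasure μ]
    (X Y : Ω → ℝ)
    (hindep : IndepFun X Y μ)
    (hXint : Integrable X μ) (hYint : Integrable Y μ)
    (hYsymm : μ.map Y = μ.map (fun ω => -Y ω)) :
    ∫ ω, slack (X ω) (Y ω) ∂μ = ∫ ω, min |X ω| |Y ω| ∂μ := by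
  have hYneg : IdentDistrib Y (fun ω => -Y ω) μ μ :=
    ⟨hYint.aemeasurable, hYint.neg.aemeasurable, hYsymm⟩
  have hflip : ∫ ω, slack (X ω) (Y ω) ∂μ = ∫ ω, slack (X ω) (-Y ω) ∂μ :=
    ((hindep.identDistrib_prodMk_neg hXint.aemeasurable hYneg).comp
      continuous_slack.measurable).integral_eq
  have hsum : ∫ ω, slack (X ω) (Y ω) ∂μ + ∫ ω, slack (X ω) (-Y ω) ∂μ
      = 2 * ∫ ω, min |X ω| |Y ω| ∂μ := by
    rw [← integral_add (hXint.slack hYint) (hXint.slack (Y := fun ω => -Y ω) hYint.neg), ← integral_const_mul]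
    simp_rw [slack_add_slack_neg]
  linarith

theorem expectation_slack_eq_expectation_min
    {Ω : Type*} [MeasurableSpace Ω] (μ : Measure Ω) [IsProbabilityMeasure μ]
    (X Y : Ω → ℝ) (hXm : Measurable X) (hYm : Measurable Y)
    (hindep : IndepFun X Y μ)
    (hXint : Integrable X μ) (hYint : Integrable Y μ)
    (hXsymm : μ.map X = μ.map (fun ω => -X ω))
    (hYsymm : μ.map Y = μ.map (fun ω => -Y ω)) :
    ∫ ω, slack (X ω) (Y ω) ∂μ = ∫ ω, min |X ω| |Y ω| ∂μ :=
  expectation_slack_eq_expectation_min_general μ X Y hindep hXint hYint hYsymm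
end

section
/- Let X and Y be independent random variables, where X is a sum of m_X independent Rademacher variables and Y is a sum of m_Y independent Rademacher variables, with m_X, m_Y ≥ m ≥ 1. Let W = min(|X|,|Y|). Then E[W] ≥ (9/512)·√m. -/
open MeasureTheory ProbabilityTheory

/-- The Rademacher distribution on ℝ: uniform on `{-1, +1}`. -/
noncomputable def rademacher : Measure ℝ :=
  (2 : ENNReal)⁻¹ • Measure.dirac (1 : ℝ) + (2 : ENNReal)⁻¹ • Measure.dirac (-1 : ℝ)

/-!
For a sum `S` of `n` independent Rademacher variables, expanding `(ε + S)^k` binomially and using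
that odd moments of `ε` vanish gives `E S² = n` and `E S⁴ = 3n² - 2n`. The Paley–Zygmund inequality
for `S²` at level `m / 4 ≤ n / 4` then yields `P(|S| ≥ √m / 2) ≥ (3n/4)² / (3n²) = 3/16`.
On the intersection of these events for `X` and `Y`, which has probability at least `(3/16)²` by
independence, `min (|X|, |Y|) ≥ √m / 2`, and Markov's inequality gives `E W ≥ (√m / 2) (3/16)²`.
-/

lemma Real.sqrt_div_two_le_abs_iff (a x : ℝ) : √a / 2 ≤ |x| ↔ a / 4 ≤ x ^ 2 := by
  rw [div_le_iff₀ two_pos, Real.sqrt_le_iff, mul_pow, sq_abs]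
  constructor
  · intro h; linarith [h.2]
  · intro h; exact ⟨by positivity, by linarith⟩

lemma sq_le_mul_of_forall_two_mul_le {d b P : ℝ} (hd : 0 ≤ d) (hb : 0 ≤ b) (hP : 0 ≤ P)
    (h : ∀ u, 0 ≤ u → 2 * u * d ≤ u ^ 2 * b + P) : d ^ 2 ≤ b * P := by
  rcases hb.eq_or_lt with rfl | hb
  · rcases hd.eq_or_lt with rfl | hd
    · simp
    · have := h (P / d + 1) (by positivity)
      field_simp at this
      nlinarith
  · have := h (d / b) (by positivity)
    field_simp at this
    nlinarith

lemma integral_rademacher (f : ℝ → ℝ) : ∫ x, f x ∂rademacher = (f 1 + f (-1)) / 2 := by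
  have hint (a : ℝ) : Integrable f ((2 : ENNReal)⁻¹ • Measure.dirac a) :=
    (integrable_dirac (by simp)).smul_measure (by simp)
  rw [rademacher, integral_add_measure (hint 1) (hint (-1)), integral_smul_measure,
    integral_smul_measure, integral_dirac, integral_dirac]
  simp [ENNReal.toReal_inv]
  ring

lemma aestronglyMeasurable_rademacher (f : ℝ → ℝ) : AEStronglyMeasurable f rademacher :=
  (aestronglyMeasurable_dirac.smul_measure _).add_measure
    (aestronglyMeasurable_dirac.smul_measure _)

lemma ae_abs_le_one_rademacher : ∀ᵐ x ∂rademacher, |x| ≤ 1 := by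
  simp [rademacher, ae_dirac_eq]

section

variable {Ω : Type*} [MeasurableSpace Ω] {μ : Measure Ω}

lemma integral_comp_of_map_eq_rademacher {Z : Ω → ℝ} (hZ : AEMeasurable Z μ)
    (hd : μ.map Z = rademacher) (f : ℝ → ℝ) :
    ∫ ω, f (Z ω) ∂μ = (f 1 + f (-1)) / 2 := by
  rw [← integral_map hZ (hd ▸ aestronglyMeasurable_rademacher f), hd, integral_rademacher]

lemma ae_abs_le_one_of_map_eq_rademacher {Z : Ω → ℝ} (hZ : AEMeasurable Z μ)
    (hd : μ.map Z = rademacher) : ∀ᵐ ω ∂μ, |Z ω| ≤ 1 :=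
  ae_of_ae_map hZ (hd ▸ ae_abs_le_one_rademacher)

lemma integrable_pow_of_ae_abs_le [IsFiniteMeasure μ] {f : Ω → ℝ}
    (hf : AEStronglyMeasurable f μ) {C : ℝ} (hC : ∀ᵐ ω ∂μ, |f ω| ≤ C) (k : ℕ) :
    Integrable (fun ω => f ω ^ k) μ :=
  .of_bound (hf.pow k) (C ^ k) <| hC.mono fun ω h => by
    simpa only [Real.norm_eq_abs, abs_pow] using pow_le_pow_left₀ (abs_nonneg _) h k

lemma ProbabilityTheory.IndepFun.integral_add_pow {X Y : Ω → ℝ} (hXY : IndepFun X Y μ)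
    (hX : ∀ k, Integrable (fun ω => X ω ^ k) μ) (hY : ∀ k, Integrable (fun ω => Y ω ^ k) μ)
    (n : ℕ) :
    ∫ ω, (X ω + Y ω) ^ n ∂μ =
      ∑ k ∈ Finset.range (n + 1), (∫ ω, X ω ^ k ∂μ) * (∫ ω, Y ω ^ (n - k) ∂μ) * n.choose k := by
  have hpow (k j : ℕ) : IndepFun (fun ω => X ω ^ k) (fun ω => Y ω ^ j) μ :=
    hXY.comp (measurable_id.pow_const k) (measurable_id.pow_const j)
  simp_rw [add_pow]
  rw [integral_finsetSum _ fun k _ => ?_]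
  · refine Finset.sum_congr rfl fun k _ => ?_
    rw [integral_mul_const]
    congr 1
    exact (hpow k (n - k)).integral_mul_eq_mul_integral (hX k).aestronglyMeasurable
      (hY _).aestronglyMeasurable
  · exact ((hpow k (n - k)).integrable_mul (hX k) (hY _)).mul_const _

theorem paley_zygmund [IsProbabilityMeasure μ] {Z : Ω → ℝ} (hZ : Measurable Z)
    (hZi : Integrable Z μ) (hZ2 : Integrable (fun ω => Z ω ^ 2) μ) {t : ℝ} (ht : 0 ≤ t)
    (htZ : t ≤ ∫ ω, Z ω ∂μ) :
    (∫ ω, Z ω ∂μ - t) ^ 2 ≤ (∫ ω, Z ω ^ 2 ∂μ) * μ.real {ω | t ≤ Z ω} := by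
  set A := {ω | t ≤ Z ω}
  have hA : MeasurableSet A := measurableSet_le measurable_const hZ
  set P := μ.real A
  have hP : 0 ≤ P := measureReal_nonneg
  have hb : 0 ≤ ∫ ω, Z ω ^ 2 ∂μ := integral_nonneg fun ω => sq_nonneg _
  have htail : ∫ ω, Z ω ∂μ ≤ t + ∫ ω, A.indicator Z ω ∂μ := by
    have hle (ω : Ω) : Z ω ≤ t + A.indicator Z ω := by
      by_cases h : ω ∈ A
      · simp only [Set.indicator_of_mem h]; linarith
      · have hZt : Z ω < t := not_le.1 h
        simp only [Set.indicator_of_notMem h]; linarith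
    calc ∫ ω, Z ω ∂μ ≤ ∫ ω, (t + A.indicator Z ω) ∂μ :=
          integral_mono hZi ((integrable_const t).add (hZi.indicator hA)) hle
      _ = t + ∫ ω, A.indicator Z ω ∂μ := by
          rw [integral_add (integrable_const t) (hZi.indicator hA), integral_const,
            probReal_univ, one_smul]
  have hone : Integrable (A.indicator 1) μ := (integrable_const (1 : ℝ)).indicator hA
  -- `2 u Z ≤ u² Z² + 1` on `A` stands in for Cauchy–Schwarz.
  have hamgm (u : ℝ) : 2 * u * ∫ ω, A.indicator Z ω ∂μ ≤ u ^ 2 * ∫ ω, Z ω ^ 2 ∂μ + P := by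
    have hle (ω : Ω) : 2 * u * A.indicator Z ω ≤ u ^ 2 * Z ω ^ 2 + A.indicator 1 ω := by
      by_cases h : ω ∈ A
      · simp only [Set.indicator_of_mem h, Pi.one_apply]; nlinarith [sq_nonneg (u * Z ω - 1)]
      · simp only [Set.indicator_of_notMem h, mul_zero, add_zero]; positivity
    calc 2 * u * ∫ ω, A.indicator Z ω ∂μ = ∫ ω, 2 * u * A.indicator Z ω ∂μ :=
          (integral_const_mul _ _).symm
      _ ≤ ∫ ω, (u ^ 2 * Z ω ^ 2 + A.indicator 1 ω) ∂μ :=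
          integral_mono ((hZi.indicator hA).const_mul _)
            ((hZ2.const_mul _).add hone) hle
      _ = u ^ 2 * ∫ ω, Z ω ^ 2 ∂μ + P := by
          rw [integral_add (hZ2.const_mul _) hone,
            integral_const_mul, integral_indicator_one hA]
  refine sq_le_mul_of_forall_two_mul_le (sub_nonneg.2 htZ) hb hP fun u hu => ?_
  nlinarith [hamgm u]

lemma ProbabilityTheory.IndepFun.measureReal_inter_preimage_eq_mul {β γ : Type*}
    [MeasurableSpace β] [MeasurableSpace γ] {X : Ω → β} {Y : Ω → γ} (hXY : IndepFun X Y μ)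
    {s : Set β} {t : Set γ} (hs : MeasurableSet s) (ht : MeasurableSet t) :
    μ.real (X ⁻¹' s ∩ Y ⁻¹' t) = μ.real (X ⁻¹' s) * μ.real (Y ⁻¹' t) := by
  simp only [measureReal_def, hXY.measure_inter_preimage_eq_mul s t hs ht, ENNReal.toReal_mul]

end

section RademacherSum

variable {Ω ι : Type*} [MeasurableSpace Ω] {μ : Measure Ω} {ε : ι → Ω → ℝ}

lemma ae_abs_sum_le_card (hmeas : ∀ i, AEMeasurable (ε i) μ)
    (hdist : ∀ i, μ.map (ε i) = rademacher) (s : Finset ι) :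
    ∀ᵐ ω ∂μ, |∑ i ∈ s, ε i ω| ≤ s.card := by
  have hb : ∀ᵐ ω ∂μ, ∀ i ∈ s, |ε i ω| ≤ 1 := (Filter.eventually_all_finset s).2 fun i _ =>
    ae_abs_le_one_of_map_eq_rademacher (hmeas i) (hdist i)
  filter_upwards [hb] with ω hω
  calc |∑ i ∈ s, ε i ω| ≤ ∑ i ∈ s, |ε i ω| := Finset.abs_sum_le_sum_abs _ _
    _ ≤ ∑ _i ∈ s, (1 : ℝ) := Finset.sum_le_sum hω
    _ = s.card := by simp

lemma integrable_sum_rademacher_pow [IsFiniteMeasure μ] (hmeas : ∀ i, Measurable (ε i))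
    (hdist : ∀ i, μ.map (ε i) = rademacher) (s : Finset ι) (k : ℕ) :
    Integrable (fun ω => (∑ i ∈ s, ε i ω) ^ k) μ :=
  integrable_pow_of_ae_abs_le (Finset.measurable_sum s fun i _ => hmeas i).aestronglyMeasurable
    (ae_abs_sum_le_card (fun i => (hmeas i).aemeasurable) hdist s) k

variable [IsProbabilityMeasure μ] (hmeas : ∀ i, Measurable (ε i))
  (hdist : ∀ i, μ.map (ε i) = rademacher) (hindep : iIndepFun ε μ)
include hmeas hdist hindep

lemma integral_sum_insert_rademacher_pow [DecidableEq ι] {a : ι} {s : Finset ι} (ha : a ∉ s)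
    (n : ℕ) :
    ∫ ω, (∑ i ∈ insert a s, ε i ω) ^ n ∂μ =
      ∑ k ∈ Finset.range (n + 1),
        (1 + (-1) ^ k) / 2 * (∫ ω, (∑ i ∈ s, ε i ω) ^ (n - k) ∂μ) * n.choose k := by
  have hind : IndepFun (ε a) (fun ω => ∑ i ∈ s, ε i ω) μ := by
    simpa only [Finset.sum_fn] using (hindep.indepFun_finsetSum_of_notMem hmeas ha).symm
  have hε (k : ℕ) : ∫ ω, ε a ω ^ k ∂μ = (1 + (-1) ^ k) / 2 := by
    simpa using integral_comp_of_map_eq_rademacher (hmeas a).aemeasurable (hdist a) (· ^ k)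
  simp only [Finset.sum_insert ha]
  rw [hind.integral_add_pow (integrable_pow_of_ae_abs_le (hmeas a).aestronglyMeasurable
    (ae_abs_le_one_of_map_eq_rademacher (hmeas a).aemeasurable (hdist a)))
    (integrable_sum_rademacher_pow hmeas hdist s)]
  simp only [hε]

lemma integral_sum_rademacher_sq (s : Finset ι) :
    ∫ ω, (∑ i ∈ s, ε i ω) ^ 2 ∂μ = s.card := by
  classical
  induction s using Finset.induction_on with
  | empty => simp
  | insert a s ha ih =>
    rw [integral_sum_insert_rademacher_pow hmeas hdist hindep ha, Finset.card_insert_of_notMem ha]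
    simp [Finset.sum_range_succ, ih]

lemma integral_sum_rademacher_pow_four (s : Finset ι) :
    ∫ ω, (∑ i ∈ s, ε i ω) ^ 4 ∂μ = 3 * (s.card : ℝ) ^ 2 - 2 * s.card := by
  classical
  induction s using Finset.induction_on with
  | empty => simp
  | insert a s ha ih =>
    rw [integral_sum_insert_rademacher_pow hmeas hdist hindep ha, Finset.card_insert_of_notMem ha]
    norm_num [Finset.sum_range_succ, ih, integral_sum_rademacher_sq hmeas hdist hindep,
      Nat.choose]
    ring

lemma three_div_sixteen_le_measureReal_abs_sum_rademacher [Fintype ι] {m : ℝ} (hm : 0 < m)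
    (hmn : m ≤ Fintype.card ι) :
    3 / 16 ≤ μ.real {ω | √m / 2 ≤ |∑ i, ε i ω|} := by
  set n : ℝ := (Fintype.card ι : ℝ)
  have h2 : ∫ ω, (∑ i, ε i ω) ^ 2 ∂μ = n := integral_sum_rademacher_sq hmeas hdist hindep _
  have h4 : ∫ ω, ((∑ i, ε i ω) ^ 2) ^ 2 ∂μ = 3 * n ^ 2 - 2 * n := by
    simp only [← pow_mul]
    exact integral_sum_rademacher_pow_four hmeas hdist hindep _
  have hpz := paley_zygmund (t := m / 4)
    ((Finset.univ.measurable_sum fun i _ => hmeas i).pow_const 2)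
    (integrable_sum_rademacher_pow hmeas hdist Finset.univ 2)
    (by simpa only [← pow_mul] using integrable_sum_rademacher_pow hmeas hdist Finset.univ 4)
    (by positivity) (by rw [h2]; linarith)
  rw [h2, h4] at hpz
  simp only [Real.sqrt_div_two_le_abs_iff]
  set P := μ.real {ω | m / 4 ≤ (∑ i, ε i ω) ^ 2}
  have hn : 0 < n := hm.trans_le hmn
  have hP : 0 ≤ P := measureReal_nonneg
  have key : 3 / 16 * (3 * n ^ 2) ≤ P * (3 * n ^ 2) := by
    nlinarith [mul_nonneg hn.le hP]
  exact le_of_mul_le_mul_right key (by positivity)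

end RademacherSum

theorem min_abs_of_independent_rademacher_sums
    {Ω : Type*} [MeasurableSpace Ω] (μ : Measure Ω) [IsProbabilityMeasure μ]
    (m mX mY : ℕ) (hm : 1 ≤ m) (hmX : m ≤ mX) (hmY : m ≤ mY)
    (ε : Fin mX → Ω → ℝ) (δ : Fin mY → Ω → ℝ)
    (hεmeas : ∀ i, Measurable (ε i)) (hδmeas : ∀ j, Measurable (δ j))
    (hεdist : ∀ i, μ.map (ε i) = rademacher)
    (hδdist : ∀ j, μ.map (δ j) = rademacher)
    (hεindep : iIndepFun ε μ)
    (hδindep : iIndepFun δ μ)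
    (hXY : IndepFun (fun ω => ∑ i, ε i ω) (fun ω => ∑ j, δ j ω) μ) :
    (9 / 512 : ℝ) * Real.sqrt m ≤
      ∫ ω, min |∑ i, ε i ω| |∑ j, δ j ω| ∂μ := by
  have hm0 : (0 : ℝ) < m := by exact_mod_cast hm
  have hX := three_div_sixteen_le_measureReal_abs_sum_rademacher hεmeas hεdist hεindep hm0
    (by simpa using hmX)
  have hY := three_div_sixteen_le_measureReal_abs_sum_rademacher hδmeas hδdist hδindep hm0
    (by simpa using hmY)
  have hint : Integrable (fun ω => min |∑ i, ε i ω| |∑ j, δ j ω|) μ :=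
    (integrable_sum_rademacher_pow hεmeas hεdist Finset.univ 1).abs.mono'
      (by fun_prop) (ae_of_all _ fun ω => by simp [abs_of_nonneg])
  have hevent : {ω | √m / 2 ≤ min |∑ i, ε i ω| |∑ j, δ j ω|} =
      (abs ∘ fun ω => ∑ i, ε i ω) ⁻¹' Set.Ici (√m / 2) ∩
        (abs ∘ fun ω => ∑ j, δ j ω) ⁻¹' Set.Ici (√m / 2) := by
    ext ω; simp
  calc (9 / 512 : ℝ) * √m = √m / 2 * (3 / 16 * (3 / 16)) := by ring
    _ ≤ √m / 2 * (μ.real {ω | √m / 2 ≤ |∑ i, ε i ω|} * μ.real {ω | √m / 2 ≤ |∑ j, δ j ω|}) := by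
        gcongr
    _ = √m / 2 * μ.real {ω | √m / 2 ≤ min |∑ i, ε i ω| |∑ j, δ j ω|} := by
        rw [hevent, (hXY.comp measurable_abs measurable_abs).measureReal_inter_preimage_eq_mul
          measurableSet_Ici measurableSet_Ici]
        rfl
    _ ≤ ∫ ω, min |∑ i, ε i ω| |∑ j, δ j ω| ∂μ :=
        mul_meas_ge_le_integral_of_nonneg
          (ae_of_all _ fun ω => le_min (abs_nonneg _) (abs_nonneg _)) hint _
end

section
/- Let S, T ⊆ [n] with 0 < |S| < n and 0 < ε < 1/4. If the fraction of edges of the complete bipartite graph between S and [n]\S that are cut by the partition (T, [n]\T) is at least 1-ε, then the normalized Hamming distance between the indicator vectors 1_S and 1_T satisfies either d(1_S,1_T) ≤ 2ε or d(1_S,1_T) ≥ 1-2ε. -/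
/-!
Write `p = |S \ T| / |S|` and `q = |Sᶜ ∩ T| / |Sᶜ|`. The uncut fraction of the edges of the
complete bipartite graph is `p (1 - q) + (1 - p) q ≤ ε < 1/4`. This forces `p` and `q` to lie on
the same side of `1/2` (otherwise one term alone is at least `1/4`), and then each of `p, q`, or
each of `1 - p, 1 - q`, is at most `2ε`. The Hamming distance is the weighted mean of `p` and `q`
with weights `|S|, |Sᶜ|`, so it inherits the same bound.
-/

open Finset

theorem card_filter_not_mem_iff_mem_product {α : Type*} [DecidableEq α] (A B T : Finset α) :
    #((A ×ˢ B).filter fun uv => ¬(uv.1 ∈ T ↔ uv.2 ∈ T)) =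
      #(A ∩ T) * #(B \ T) + #(A \ T) * #(B ∩ T) := by
  have hsplit : (A ×ˢ B).filter (fun uv => ¬(uv.1 ∈ T ↔ uv.2 ∈ T)) =
      (A ∩ T) ×ˢ (B \ T) ∪ (A \ T) ×ˢ (B ∩ T) := by
    ext ⟨u, v⟩
    simp only [mem_filter, mem_product, mem_union, mem_inter, mem_sdiff]
    tauto
  have hdisj : Disjoint ((A ∩ T) ×ˢ (B \ T)) ((A \ T) ×ˢ (B ∩ T)) :=
    disjoint_product.mpr (Or.inl (disjoint_sdiff_inter A T).symm)
  rw [hsplit, card_union_of_disjoint hdisj, card_product, card_product]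

theorem le_two_mul_or_one_sub_two_mul_le_of_mul_one_sub_add_le {p q ε : ℝ}
    (hp₀ : 0 ≤ p) (hp₁ : p ≤ 1) (hq₀ : 0 ≤ q) (hq₁ : q ≤ 1) (hε : ε < 1 / 4)
    (h : p * (1 - q) + (1 - p) * q ≤ ε) :
    (p ≤ 2 * ε ∧ q ≤ 2 * ε) ∨ (1 - 2 * ε ≤ p ∧ 1 - 2 * ε ≤ q) := by
  rcases le_total p (1 / 2) with hp | hp <;> rcases le_total q (1 / 2) with hq | hq
  · exact Or.inl ⟨by nlinarith, by nlinarith⟩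
  · nlinarith [mul_le_mul hq (by linarith : 1 / 2 ≤ 1 - p) (by norm_num) hq₀]
  · nlinarith [mul_le_mul hp (by linarith : 1 / 2 ≤ 1 - q) (by norm_num) hp₀]
  · exact Or.inr ⟨by nlinarith, by nlinarith⟩

theorem div_add_le_two_mul_or_one_sub_two_mul_le_div_add {s m a b ε : ℝ}
    (hs : 0 < s) (hm : 0 < m) (ha₀ : 0 ≤ a) (has : a ≤ s) (hb₀ : 0 ≤ b) (hbm : b ≤ m)
    (hε : ε < 1 / 4) (hcut : 1 - ε ≤ ((s - a) * (m - b) + a * b) / (s * m)) :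
    (a + b) / (s + m) ≤ 2 * ε ∨ 1 - 2 * ε ≤ (a + b) / (s + m) := by
  have huncut : a / s * (1 - b / m) + (1 - a / s) * (b / m) ≤ ε := by
    have : ((s - a) * (m - b) + a * b) / (s * m) =
        1 - (a / s * (1 - b / m) + (1 - a / s) * (b / m)) := by
      field_simp
      ring
    linarith
  have hsm : 0 < s + m := add_pos hs hm
  rcases le_two_mul_or_one_sub_two_mul_le_of_mul_one_sub_add_le (div_nonneg ha₀ hs.le)
    ((div_le_one hs).mpr has) (div_nonneg hb₀ hm.le) ((div_le_one hm).mpr hbm) hε huncut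
    with ⟨hp, hq⟩ | ⟨hp, hq⟩
  · rw [div_le_iff₀ hs] at hp
    rw [div_le_iff₀ hm] at hq
    exact Or.inl ((div_le_iff₀ hsm).mpr (by linarith))
  · rw [le_div_iff₀ hs] at hp
    rw [le_div_iff₀ hm] at hq
    exact Or.inr ((le_div_iff₀ hsm).mpr (by linarith))

open Classical in
theorem bip_cut_close_implies_hamming_general (n : ℕ) (S T : Finset (Fin n)) (ε : ℝ)
    (hS0 : 0 < S.card) (hSn : S.card < n) (hε1 : ε < 1 / 4)
    (hval : 1 - ε ≤
      (((S ×ˢ Sᶜ).filter fun uv => ¬((uv.1 ∈ T) ↔ (uv.2 ∈ T))).card : ℝ) /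
        (S.card * Sᶜ.card)) :
    (((S \ T).card + (Sᶜ ∩ T).card : ℝ) / n ≤ 2 * ε) ∨
    (1 - 2 * ε ≤ ((S \ T).card + (Sᶜ ∩ T).card : ℝ) / n) := by
  have hn : (#S : ℝ) + #Sᶜ = n := by
    exact_mod_cast S.card_add_card_compl.trans (Fintype.card_fin n)
  have hST : (#(S ∩ T) : ℝ) = #S - #(S \ T) := by
    rw [eq_sub_iff_add_eq]; exact_mod_cast S.card_inter_add_card_sdiff T
  have hScT : (#(Sᶜ \ T) : ℝ) = #Sᶜ - #(Sᶜ ∩ T) := by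
    rw [eq_sub_iff_add_eq']; exact_mod_cast Sᶜ.card_inter_add_card_sdiff T
  rw [card_filter_not_mem_iff_mem_product, Nat.cast_add, Nat.cast_mul, Nat.cast_mul, hST,
    hScT] at hval
  rw [← hn]
  exact div_add_le_two_mul_or_one_sub_two_mul_le_div_add (by exact_mod_cast hS0)
    (by rw [card_compl, Fintype.card_fin]; exact_mod_cast Nat.sub_pos_of_lt hSn)
    (by positivity) (by exact_mod_cast card_le_card sdiff_subset)
    (by positivity) (by exact_mod_cast card_le_card inter_subset_left) hε1 hval

open Classical in
theorem bip_cut_close_implies_hamming (n : ℕ) (S T : Finset (Fin n)) (ε : ℝ)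
    (hS0 : 0 < S.card) (hSn : S.card < n) (hε0 : 0 < ε) (hε1 : ε < 1 / 4)
    (hval : 1 - ε ≤
      (((S ×ˢ Sᶜ).filter fun uv => ¬((uv.1 ∈ T) ↔ (uv.2 ∈ T))).card : ℝ) /
        (S.card * Sᶜ.card)) :
    (((S \ T).card + (Sᶜ ∩ T).card : ℝ) / n ≤ 2 * ε) ∨
    (1 - 2 * ε ≤ ((S \ T).card + (Sᶜ ∩ T).card : ℝ) / n) :=
  bip_cut_close_implies_hamming_general n S T ε hS0 hSn hε1 hval
end

section
/- Let G be a graph whose connected components are exactly one 4-cycle C (on vertex set 𝒞 with 4 vertices) together with components that are each either a single edge or a path on 4 vertices (length-3 path). Then for every nonempty vertex subset S with S ≠ 𝒞, the density den(S) := |E(G[S])|/|S| satisfies den(S) ≤ 7/8, while den(𝒞) = 1. -/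
/-!
Every component other than the 4-cycle is a path on at most four vertices, so every vertex set
inside it spans at most `3/4` of its size in edges; the same holds for proper subsets of the
4-cycle. Summing over components, a set `S` with `𝒞 ⊄ S` has density at most `3/4`. If `S ⊋ 𝒞`,
then `e(S) = 4 + e(S \ 𝒞)` and `4 e(S \ 𝒞) ≤ 3 |S \ 𝒞|` with `S \ 𝒞 ≠ ∅`; by integrality
`e(S \ 𝒞) ≤ |S \ 𝒞| - 1`, and adding the two bounds gives `8 e(S) ≤ 7 |S|`.
-/

open SimpleGraph Finset

theorem Finset.exists_eq_map_of_subset_range {α β : Type*} [Fintype α] (f : α ↪ β) {T : Finset β}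
    (hT : ↑T ⊆ Set.range f) : ∃ T' : Finset α, T = T'.map f := by
  have : T ⊆ univ.map f := by
    rwa [← coe_subset, coe_map, coe_univ, Set.image_univ]
  obtain ⟨T', -, rfl⟩ := subset_map_iff.1 this
  exact ⟨T', rfl⟩

namespace SimpleGraph

variable {V W : Type*} {G : SimpleGraph V} {H : SimpleGraph W}

theorem exists_embedding_range_eq {s : Set V} (φ : G.induce s ≃g H) :
    ∃ f : H ↪g G, Set.range f = s := by
  refine ⟨(Embedding.induce s).comp φ.symm.toEmbedding, Set.ext fun v => ⟨?_, fun hv => ?_⟩⟩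
  · rintro ⟨w, rfl⟩
    exact (φ.symm w).2
  · exact ⟨φ ⟨v, hv⟩, by simp⟩

variable [DecidableEq V]

def edgesIn (G : SimpleGraph V) [Fintype G.edgeSet] (S : Finset V) : Finset (Sym2 V) :=
  G.edgeFinset ∩ S.sym2

variable [Fintype G.edgeSet]

@[simp]
theorem mk_mem_edgesIn {S : Finset V} {x y : V} :
    s(x, y) ∈ G.edgesIn S ↔ G.Adj x y ∧ x ∈ S ∧ y ∈ S := by
  simp [edgesIn]

theorem filter_forall_mem_eq_edgesIn (S : Finset V)
    [DecidablePred fun e : Sym2 V => ∀ v ∈ e, v ∈ S] :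
    {e ∈ G.edgeFinset | ∀ v ∈ e, v ∈ S} = G.edgesIn S := by
  ext e
  simp [edgesIn, mem_sym2_iff]

theorem card_edgesIn_map [DecidableEq W] [Fintype H.edgeSet] (f : H ↪g G) (T : Finset W) :
    #(G.edgesIn (T.map f.toEmbedding)) = #(H.edgesIn T) := by
  have : G.edgesIn (T.map f.toEmbedding) = (H.edgesIn T).map f.toEmbedding.sym2Map := by
    rw [edgesIn, edgesIn, sym2_map]
    ext e
    simp only [mem_inter, mem_map, mem_edgeFinset]
    constructor
    · rintro ⟨he, e', he', rfl⟩
      exact ⟨e', ⟨f.map_mem_edgeSet_iff.1 he, he'⟩, rfl⟩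
    · rintro ⟨e', ⟨he, he'⟩, rfl⟩
      exact ⟨f.map_mem_edgeSet_iff.2 he, e', he', rfl⟩
  rw [this, card_map]

section Embedding

variable [Fintype W] [DecidableEq W] [Fintype H.edgeSet] (f : H ↪g G) {a b : ℕ}

theorem mul_card_edgesIn_le_of_subset_range
    (hH : ∀ T' : Finset W, a * #(H.edgesIn T') ≤ b * #T') {T : Finset V}
    (hT : ↑T ⊆ Set.range f) : a * #(G.edgesIn T) ≤ b * #T := by
  obtain ⟨T', rfl⟩ := exists_eq_map_of_subset_range f.toEmbedding hT
  rw [card_edgesIn_map, card_map]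
  exact hH T'

theorem mul_card_edgesIn_le_of_ssubset_range
    (hH : ∀ T' : Finset W, T' ≠ univ → a * #(H.edgesIn T') ≤ b * #T') {T : Finset V}
    (hT : ↑T ⊂ Set.range f) : a * #(G.edgesIn T) ≤ b * #T := by
  obtain ⟨T', rfl⟩ := exists_eq_map_of_subset_range f.toEmbedding hT.subset
  rw [card_edgesIn_map, card_map]
  refine hH T' ?_
  rintro rfl
  exact hT.ne (by simp)

end Embedding

theorem mul_card_edgesIn_le_of_components [DecidableEq G.ConnectedComponent] {a b : ℕ}
    (S : Finset V)
    (h : ∀ c : G.ConnectedComponent, a * #(G.edgesIn {v ∈ S | G.connectedComponentMk v = c}) ≤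
      b * #{v ∈ S | G.connectedComponentMk v = c}) :
    a * #(G.edgesIn S) ≤ b * #S := by
  have hsub : G.edgesIn S ⊆ (S.image G.connectedComponentMk).biUnion
      fun c => G.edgesIn {v ∈ S | G.connectedComponentMk v = c} := by
    intro e he
    induction e using Sym2.ind with
    | _ x y =>
      obtain ⟨hxy, hx, hy⟩ := mk_mem_edgesIn.1 he
      have hyx := (ConnectedComponent.connectedComponentMk_eq_of_adj hxy).symm
      exact mem_biUnion.2 ⟨_, mem_image_of_mem _ hx,
        mk_mem_edgesIn.2 ⟨hxy, mem_filter.2 ⟨hx, rfl⟩, mem_filter.2 ⟨hy, hyx⟩⟩⟩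
  calc a * #(G.edgesIn S)
      ≤ a * ∑ c ∈ S.image G.connectedComponentMk,
          #(G.edgesIn {v ∈ S | G.connectedComponentMk v = c}) :=
        Nat.mul_le_mul_left _ ((card_le_card hsub).trans card_biUnion_le)
    _ ≤ b * ∑ c ∈ S.image G.connectedComponentMk, #{v ∈ S | G.connectedComponentMk v = c} := by
        simpa only [mul_sum] using sum_le_sum fun c _ => h c
    _ = b * #S := by rw [← card_eq_sum_card_image]

theorem card_edgesIn_le_add_of_adj_closed {A : Finset V}
    (hA : ∀ ⦃x y⦄, G.Adj x y → x ∈ A → y ∈ A) (S : Finset V) :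
    #(G.edgesIn S) ≤ #(G.edgesIn (S ∩ A)) + #(G.edgesIn (S \ A)) := by
  refine (card_le_card fun e he => ?_).trans (card_union_le _ _)
  induction e using Sym2.ind with
  | _ x y =>
    obtain ⟨hxy, hx, hy⟩ := mk_mem_edgesIn.1 he
    by_cases hxA : x ∈ A
    · exact mem_union_left _ (by simp [hxy, hx, hy, hxA, hA hxy hxA])
    · have hyA : y ∉ A := fun hyA => hxA (hA hxy.symm hyA)
      exact mem_union_right _ (by simp_all)

instance (n : ℕ) : DecidableRel (pathGraph n).Adj := fun _ _ =>
  decidable_of_iff _ pathGraph_adj.symm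

theorem four_mul_card_edgesIn_pathGraph_two_le (T : Finset (Fin 2)) :
    4 * #((pathGraph 2).edgesIn T) ≤ 3 * #T := by
  revert T
  decide

theorem four_mul_card_edgesIn_pathGraph_four_le (T : Finset (Fin 4)) :
    4 * #((pathGraph 4).edgesIn T) ≤ 3 * #T := by
  revert T
  decide

theorem four_mul_card_edgesIn_cycleGraph_four_le (T : Finset (Fin 4)) (hT : T ≠ univ) :
    4 * #((cycleGraph 4).edgesIn T) ≤ 3 * #T := by
  revert T
  decide

theorem card_edgesIn_cycleGraph_four_univ : #((cycleGraph 4).edgesIn univ) = 4 := by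
  decide

theorem four_mul_card_edgesIn_le_of_not_subset [DecidableEq G.ConnectedComponent]
    {𝒞 : Finset V} {c₀ : G.ConnectedComponent} (hc₀ : c₀.supp = ↑𝒞)
    (hc₀cyc : Nonempty (G.induce c₀.supp ≃g cycleGraph 4))
    (hother : ∀ c : G.ConnectedComponent, c ≠ c₀ →
      Nonempty (G.induce c.supp ≃g pathGraph 2) ∨ Nonempty (G.induce c.supp ≃g pathGraph 4))
    (T : Finset V) (hT : ¬ 𝒞 ⊆ T) : 4 * #(G.edgesIn T) ≤ 3 * #T := by
  refine mul_card_edgesIn_le_of_components T fun c => ?_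
  have hsupp : ↑{v ∈ T | G.connectedComponentMk v = c} ⊆ c.supp :=
    fun v hv => (c.mem_supp_iff v).2 (mem_filter.1 hv).2
  by_cases hc : c = c₀
  · subst hc
    obtain ⟨f, hf⟩ := exists_embedding_range_eq hc₀cyc.some
    refine mul_card_edgesIn_le_of_ssubset_range f four_mul_card_edgesIn_cycleGraph_four_le ?_
    refine hf ▸ Set.ssubset_iff_subset_ne.2 ⟨hsupp, fun h => hT ?_⟩
    rw [← coe_subset, ← hc₀, ← h, coe_subset]
    exact filter_subset _ _
  · rcases hother c hc with h | h <;> obtain ⟨f, hf⟩ := exists_embedding_range_eq h.some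
    · exact mul_card_edgesIn_le_of_subset_range f four_mul_card_edgesIn_pathGraph_two_le
        (hf ▸ hsupp)
    · exact mul_card_edgesIn_le_of_subset_range f four_mul_card_edgesIn_pathGraph_four_le
        (hf ▸ hsupp)

end SimpleGraph

open SimpleGraph in
open Classical in
theorem density_of_square_plus_edges_and_paths_general
    {V : Type*} [Fintype V] (G : SimpleGraph V) (𝒞 : Finset V)
    (den : Finset V → ℝ)
    (hden : ∀ S : Finset V,
      den S = ((G.edgeFinset.filter fun e => ∀ v ∈ e, v ∈ S).card : ℝ) / S.card)
    (c₀ : G.ConnectedComponent)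
    (hc₀ : c₀.supp = (𝒞 : Set V))
    (hc₀cyc : Nonempty (G.induce c₀.supp ≃g cycleGraph 4))
    (hother : ∀ c : G.ConnectedComponent, c ≠ c₀ →
      Nonempty (G.induce c.supp ≃g pathGraph 2) ∨
      Nonempty (G.induce c.supp ≃g pathGraph 4)) :
    den 𝒞 = 1 ∧ ∀ S : Finset V, S.Nonempty → S ≠ 𝒞 → den S ≤ 7 / 8 := by
  simp only [hden, filter_forall_mem_eq_edgesIn]
  obtain ⟨f, hf⟩ := exists_embedding_range_eq hc₀cyc.some
  have h𝒞 : 𝒞 = univ.map f.toEmbedding := by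
    rw [← coe_inj, coe_map, coe_univ, Set.image_univ, ← hc₀]
    exact hf.symm
  have hcard : #𝒞 = 4 := by rw [h𝒞, card_map, card_univ, Fintype.card_fin]
  have hedges : #(G.edgesIn 𝒞) = 4 := by
    rw [h𝒞, card_edgesIn_map, card_edgesIn_cycleGraph_four_univ]
  have hsparse := four_mul_card_edgesIn_le_of_not_subset hc₀ hc₀cyc hother
  refine ⟨by rw [hcard, hedges]; norm_num, fun S hS hS𝒞 => ?_⟩
  rw [div_le_div_iff₀ (by exact_mod_cast hS.card_pos) (by norm_num)]
  norm_cast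
  by_cases h𝒞S : 𝒞 ⊆ S
  · have hrest := hsparse (S \ 𝒞) fun h => by
      simp [disjoint_self.1 (subset_sdiff.1 h).2] at hcard
    have hsplit := card_edgesIn_le_add_of_adj_closed (A := 𝒞)
      (fun x y hxy hx => mem_coe.1 (hc₀ ▸ c₀.mem_supp_of_adj_mem_supp (hc₀ ▸ mem_coe.2 hx) hxy)) S
    rw [inter_eq_right.2 h𝒞S] at hsplit
    have hlt := card_lt_card (ssubset_of_subset_of_ne h𝒞S (Ne.symm hS𝒞))
    have := card_sdiff_add_card_eq_card h𝒞S
    have : #(G.edgesIn (S \ 𝒞)) < #(S \ 𝒞) := by omega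
    omega
  · have := hsparse S h𝒞S
    omega

open SimpleGraph in
open Classical in
/-- If the connected components of `G` consist of exactly one 4-cycle (on vertex
set `𝒞`), with every other component a single edge or a path on 4 vertices, then
`𝒞` has density 1 and every other nonempty vertex subset has density at most 7/8.
Here the density of `S` is the number of edges with both endpoints in `S`, divided
by `|S|`. -/
theorem density_of_square_plus_edges_and_paths
    {V : Type*} [Fintype V] (G : SimpleGraph V) (𝒞 : Finset V)
    (den : Finset V → ℝ)
    (hden : ∀ S : Finset V,
      den S = ((G.edgeFinset.filter fun e => ∀ v ∈ e, v ∈ S).card : ℝ) / S.card)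
    (c₀ : G.ConnectedComponent)
    (hc₀ : c₀.supp = (𝒞 : Set V))
    (hc₀cyc : Nonempty (G.induce c₀.supp ≃g cycleGraph 4))
    (huniq : ∀ c : G.ConnectedComponent,
      Nonempty (G.induce c.supp ≃g cycleGraph 4) → c = c₀)
    (hother : ∀ c : G.ConnectedComponent, c ≠ c₀ →
      Nonempty (G.induce c.supp ≃g pathGraph 2) ∨
      Nonempty (G.induce c.supp ≃g pathGraph 4)) :
    den 𝒞 = 1 ∧ ∀ S : Finset V, S.Nonempty → S ≠ 𝒞 → den S ≤ 7 / 8 :=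
  density_of_square_plus_edges_and_paths_general G 𝒞 den hden c₀ hc₀ hc₀cyc hother
end
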